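/- (Self-redundancy, Axiom 2, holds for the ordering Q ⊏ X iff H[Q|X] = 0.) Let X : Ω → ℕ and Y : Ω → ℕ be measurable functions with finite range on a probability space (Ω, μ). Then sSup { I[Q : Y] | Q : Ω → ℕ measurable with finite range and H[Q | X] = 0 } = I[X : Y]; that is, with a single source variable the redundant information equals the mutual information between source and target. -/

import Mathlib

open MeasureTheory ProbabilityTheory Real

/-- Shannon entropy (natural logarithm) of a random variable `X : Ω → S`:
`H[X] = ∑ₓ -P(X = x) log P(X = x)`. -/
noncomputable def entropy {Ω S : Type*} [MeasurableSpace Ω] [MeasurableSpace S]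
    (μ : Measure Ω) (X : Ω → S) : ℝ :=
  ∑' x : S, Real.negMulLog (μ (X ⁻¹' {x})).toReal

/-- Conditional Shannon entropy `H[X|Y] = ∑_y P(Y = y) · H[X ; μ conditioned on Y = y]`. -/
noncomputable def condEntropy {Ω S T : Type*} [MeasurableSpace Ω] [MeasurableSpace S]
    [MeasurableSpace T] (μ : Measure Ω) (X : Ω → S) (Y : Ω → T) : ℝ :=
  ∑' y : T, (μ (Y ⁻¹' {y})).toReal * entropy (μ[|Y ⁻¹' {y}]) X

/-- Mutual information `I[X:Y] = H[X] + H[Y] − H[⟨X,Y⟩]`. -/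
noncomputable def mutualInfo {Ω S T : Type*} [MeasurableSpace Ω] [MeasurableSpace S]
    [MeasurableSpace T] (μ : Measure Ω) (X : Ω → S) (Y : Ω → T) : ℝ :=
  entropy μ X + entropy μ Y - entropy μ (fun ω => (X ω, Y ω))

/-- Conditional mutual information
`I[X:Y|Z] = H[⟨X,Z⟩] + H[⟨Y,Z⟩] − H[⟨⟨X,Y⟩,Z⟩] − H[Z]`. -/
noncomputable def condMutualInfo {Ω S T W : Type*} [MeasurableSpace Ω] [MeasurableSpace S]
    [MeasurableSpace T] [MeasurableSpace W] (μ : Measure Ω)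
    (X : Ω → S) (Y : Ω → T) (Z : Ω → W) : ℝ :=
  entropy μ (fun ω => (X ω, Z ω)) + entropy μ (fun ω => (Y ω, Z ω))
    - entropy μ (fun ω => ((X ω, Y ω), Z ω)) - entropy μ Z

/-! Taking `Q = X` shows that `I[X:Y]` belongs to the set. Conversely, `H[Q|X] = 0` forces `Q` to
be almost surely constant on every fibre of `X` of positive mass, so `Q = f ∘ X` almost surely,
and the data-processing inequality `I[f(X):Y] ≤ I[X:Y]` bounds every element of the set. For each
value `y` of `Y` that inequality is the log-sum inequality on the fibres of `f`, which in turn is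
Jensen's inequality for `t ↦ t log t`. -/

open Set

lemma mul_log_div_mul_of_le {p a b : ℝ} (hp : 0 ≤ p) (ha : p ≤ a) (hb : p ≤ b) :
    p * log (p / (a * b)) = p * log p - p * log a - p * log b := by
  rcases hp.eq_or_lt with rfl | hp
  · simp
  have ha' := hp.trans_le ha
  have hb' := hp.trans_le hb
  rw [log_div hp.ne' (by positivity), log_mul ha'.ne' hb'.ne']
  ring

theorem sum_mul_log_div_sum_le {ι : Type*} (s : Finset ι) {a b : ι → ℝ}
    (ha : ∀ i ∈ s, 0 ≤ a i) (hb : ∀ i ∈ s, 0 ≤ b i) (hab : ∀ i ∈ s, b i = 0 → a i = 0) :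
    (∑ i ∈ s, a i) * log ((∑ i ∈ s, a i) / ∑ i ∈ s, b i) ≤ ∑ i ∈ s, a i * log (a i / b i) := by
  set B := ∑ i ∈ s, b i
  rcases (Finset.sum_nonneg hb).eq_or_lt with hB | hB
  · have h0 : ∀ i ∈ s, a i = 0 := fun i hi =>
      hab i hi ((Finset.sum_eq_zero_iff_of_nonneg hb).1 hB.symm i hi)
    rw [Finset.sum_eq_zero h0, Finset.sum_eq_zero fun i hi => by rw [h0 i hi, zero_mul], zero_mul]
  have hw : ∀ i ∈ s, b i / B * (a i / b i) = a i / B := fun i hi => by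
    rcases (hb i hi).eq_or_lt with h | h
    · simp [hab i hi h.symm, ← h]
    · field_simp
  -- Jensen for `t ↦ t log t` with weights `b i / B` at the points `a i / b i`
  have key := convexOn_mul_log.map_sum_le (t := s) (w := fun i => b i / B)
    (p := fun i => a i / b i) (fun i hi => div_nonneg (hb i hi) hB.le)
    (by rw [← Finset.sum_div, div_self hB.ne']) (fun i hi => div_nonneg (ha i hi) (hb i hi))
  have hmean : ∑ i ∈ s, (b i / B) • (a i / b i) = (∑ i ∈ s, a i) / B := by
    simp only [smul_eq_mul]
    rw [Finset.sum_congr rfl hw, Finset.sum_div]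
  have hvalue : ∑ i ∈ s, (b i / B) • (a i / b i * log (a i / b i)) =
      (∑ i ∈ s, a i * log (a i / b i)) / B := by
    rw [Finset.sum_div]
    refine Finset.sum_congr rfl fun i hi => ?_
    rw [smul_eq_mul, ← mul_assoc, hw i hi, div_mul_eq_mul_div]
  rwa [hmean, hvalue, le_div_iff₀ hB, mul_right_comm, div_mul_cancel₀ _ hB.ne'] at key

theorem sum_negMulLog_marginals_sub_sum_negMulLog {ι κ : Type*} {A : Finset ι} {B : Finset κ}
    {p : ι → κ → ℝ} {P : ι → ℝ} {R : κ → ℝ} (hp : ∀ x ∈ A, ∀ y ∈ B, 0 ≤ p x y)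
    (hP : ∀ x ∈ A, P x = ∑ y ∈ B, p x y) (hR : ∀ y ∈ B, R y = ∑ x ∈ A, p x y) :
    ∑ x ∈ A, negMulLog (P x) + ∑ y ∈ B, negMulLog (R y) - ∑ x ∈ A, ∑ y ∈ B, negMulLog (p x y) =
      ∑ x ∈ A, ∑ y ∈ B, p x y * log (p x y / (P x * R y)) := by
  have hPlog : ∀ x ∈ A, negMulLog (P x) = -∑ y ∈ B, p x y * log (P x) := fun x hx => by
    rw [← Finset.sum_mul, ← hP x hx, negMulLog, neg_mul]
  have hRlog : ∀ y ∈ B, negMulLog (R y) = -∑ x ∈ A, p x y * log (R y) := fun y hy => by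
    rw [← Finset.sum_mul, ← hR y hy, negMulLog, neg_mul]
  have hterm : ∀ x ∈ A, ∀ y ∈ B, p x y * log (p x y / (P x * R y)) =
      p x y * log (p x y) - p x y * log (P x) - p x y * log (R y) := fun x hx y hy =>
    mul_log_div_mul_of_le (hp x hx y hy)
      (hP x hx ▸ Finset.single_le_sum (hp x hx) hy)
      (hR y hy ▸ Finset.single_le_sum (fun x' hx' => hp x' hx' y hy) hx)
  rw [Finset.sum_congr rfl hPlog, Finset.sum_congr rfl hRlog,
    Finset.sum_congr rfl fun x hx => Finset.sum_congr rfl (hterm x hx)]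
  simp only [Finset.sum_sub_distrib, Finset.sum_neg_distrib, negMulLog, neg_mul]
  rw [Finset.sum_comm (s := B)]
  ring

section Discrete

variable {Ω α β : Type*} [MeasurableSpace Ω] [MeasurableSpace α] [MeasurableSpace β]
  {μ : Measure Ω}

lemma entropy_eq_sum {X : Ω → α} {A : Finset α} (hA : range X ⊆ A) :
    entropy μ X = ∑ x ∈ A, negMulLog (μ.real (X ⁻¹' {x})) :=
  tsum_eq_sum fun x hx => by
    rw [preimage_singleton_eq_empty.2 fun h => hx (hA h)]
    simp

lemma entropy_nonneg [IsZeroOrProbabilityMeasure μ] (X : Ω → α) : 0 ≤ entropy μ X :=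
  tsum_nonneg fun _ => negMulLog_nonneg measureReal_nonneg measureReal_le_one

lemma entropy_congr_ae {X X' : Ω → α} (h : X =ᵐ[μ] X') : entropy μ X = entropy μ X' :=
  tsum_congr fun x => by rw [measure_congr (h.preimage {x})]

lemma mutualInfo_congr_ae {X X' : Ω → α} (h : X =ᵐ[μ] X') (Y : Ω → β) :
    mutualInfo μ X Y = mutualInfo μ X' Y := by
  rw [mutualInfo, mutualInfo, entropy_congr_ae h,
    entropy_congr_ae (X := fun ω => (X ω, Y ω)) (X' := fun ω => (X' ω, Y ω))
      (h.mono fun ω hω => congrArg (·, Y ω) hω)]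

lemma ae_imp_of_ae_cond [IsFiniteMeasure μ] {s : Set Ω} (hs : MeasurableSet s) {p : Ω → Prop}
    (h : ∀ᵐ ω ∂μ[|s], p ω) : ∀ᵐ ω ∂μ, ω ∈ s → p ω := by
  rwa [ProbabilityTheory.cond,
    Measure.ae_ennreal_smul_measure_iff (ENNReal.inv_ne_zero.2 (measure_ne_top μ s)),
    ae_restrict_iff' hs] at h

lemma entropy_eq_zero_of_ae_eq_const [IsProbabilityMeasure μ] {X : Ω → α} {a : α}
    (h : ∀ᵐ ω ∂μ, X ω = a) : entropy μ X = 0 := by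
  refine (tsum_congr fun x => ?_).trans tsum_zero
  by_cases hx : a = x
  · subst hx
    rw [measure_congr (ae_eq_univ.2 (ae_iff.1 h) : X ⁻¹' {a} =ᵐ[μ] univ)]
    simp
  · rw [measure_mono_null (fun ω hω => ?_) (ae_iff.1 h)]
    · simp
    · exact fun hωa => hx (hωa ▸ hω)

lemma entropy_cond_eq_zero_of_condEntropy_eq_zero [IsFiniteMeasure μ] {Q : Ω → β} {X : Ω → α}
    (hXfin : (range X).Finite) (h : condEntropy μ Q X = 0) {x : α} (hx : μ (X ⁻¹' {x}) ≠ 0) :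
    entropy μ[|X ⁻¹' {x}] Q = 0 := by
  have hsum : HasSum (fun x => μ.real (X ⁻¹' {x}) * entropy μ[|X ⁻¹' {x}] Q) (condEntropy μ Q X) :=
    (summable_of_ne_finset_zero (s := hXfin.toFinset) fun x hx => by
      rw [preimage_singleton_eq_empty.2 (by simpa using hx)]
      simp).hasSum
  rw [h, hasSum_zero_iff_of_nonneg fun x => mul_nonneg measureReal_nonneg (entropy_nonneg Q)]
    at hsum
  exact (mul_eq_zero.1 (congrFun hsum x)).resolve_left
    (ENNReal.toReal_pos hx (measure_ne_top μ _)).ne'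

variable [MeasurableSingletonClass α] [MeasurableSingletonClass β]

lemma sum_measureReal_preimage_inter [IsFiniteMeasure μ] {X : Ω → α} (hX : Measurable X)
    (A : Finset α) (t : Set Ω) :
    ∑ x ∈ A, μ.real (X ⁻¹' {x} ∩ t) = μ.real (X ⁻¹' A ∩ t) := by
  simp_rw [← measureReal_restrict_apply (hX (measurableSet_singleton _)),
    sum_measureReal_preimage_singleton (μ := μ.restrict t) A
      fun x _ => hX (measurableSet_singleton x)]
  exact measureReal_restrict_apply (hX A.measurableSet)

lemma sum_measureReal_preimage_inter_of_range_subset [IsFiniteMeasure μ] {X : Ω → α}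
    (hX : Measurable X) {A : Finset α} (hA : range X ⊆ A) (t : Set Ω) :
    ∑ x ∈ A, μ.real (X ⁻¹' {x} ∩ t) = μ.real t := by
  rw [sum_measureReal_preimage_inter hX, preimage_eq_univ_iff.2 hA, univ_inter]

lemma sum_measureReal_fiber_inter [IsFiniteMeasure μ] {γ : Type*} [DecidableEq γ] {X : Ω → α}
    (hX : Measurable X) {A : Finset α} (hA : range X ⊆ A) (f : α → γ) (c : γ) (t : Set Ω) :
    ∑ x ∈ A with f x = c, μ.real (X ⁻¹' {x} ∩ t) = μ.real ((f ∘ X) ⁻¹' {c} ∩ t) := by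
  rw [sum_measureReal_preimage_inter hX]
  congr 2
  ext ω
  simpa using fun _ => hA (mem_range_self ω)

lemma mutualInfo_eq_sum [IsFiniteMeasure μ] {X : Ω → α} {Y : Ω → β} (hX : Measurable X)
    (hY : Measurable Y) {A : Finset α} {B : Finset β} (hA : range X ⊆ A) (hB : range Y ⊆ B) :
    mutualInfo μ X Y = ∑ x ∈ A, ∑ y ∈ B, μ.real (X ⁻¹' {x} ∩ Y ⁻¹' {y}) *
      log (μ.real (X ⁻¹' {x} ∩ Y ⁻¹' {y}) / (μ.real (X ⁻¹' {x}) * μ.real (Y ⁻¹' {y}))) := by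
  have hXY : range (fun ω => (X ω, Y ω)) ⊆ ↑(A ×ˢ B) := by
    rintro _ ⟨ω, rfl⟩
    exact Finset.mem_coe.2 (Finset.mem_product.2 ⟨hA (mem_range_self ω), hB (mem_range_self ω)⟩)
  have hpair : ∀ x y, (fun ω => (X ω, Y ω)) ⁻¹' {(x, y)} = X ⁻¹' {x} ∩ Y ⁻¹' {y} := fun x y => by
    rw [← singleton_prod_singleton, mk_preimage_prod]
  rw [mutualInfo, entropy_eq_sum hA, entropy_eq_sum hB, entropy_eq_sum hXY, Finset.sum_product]
  simp only [hpair]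
  refine sum_negMulLog_marginals_sub_sum_negMulLog (fun _ _ _ _ => measureReal_nonneg)
    (fun x _ => ?_) (fun y _ => (sum_measureReal_preimage_inter_of_range_subset hX hA _).symm)
  rw [← sum_measureReal_preimage_inter_of_range_subset hY hB (X ⁻¹' {x})]
  exact Finset.sum_congr rfl fun y _ => by rw [inter_comm]

theorem mutualInfo_comp_le [IsFiniteMeasure μ] {γ : Type*} [MeasurableSpace γ]
    [MeasurableSingletonClass γ] {X : Ω → α} {Y : Ω → β} (hX : Measurable X) (hY : Measurable Y)
    (hXfin : (range X).Finite) (hYfin : (range Y).Finite) {f : α → γ} (hf : Measurable f) :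
    mutualInfo μ (f ∘ X) Y ≤ mutualInfo μ X Y := by
  classical
  have hA : range X ⊆ hXfin.toFinset := by simp
  have hB : range Y ⊆ hYfin.toFinset := by simp
  have hfA : range (f ∘ X) ⊆ hXfin.toFinset.image f := by
    rw [range_comp, Finset.coe_image]
    exact image_mono hA
  rw [mutualInfo_eq_sum (hf.comp hX) hY hfA hB, mutualInfo_eq_sum hX hY hA hB,
    ← Finset.sum_fiberwise_of_maps_to fun x hx => Finset.mem_image_of_mem f hx]
  refine Finset.sum_le_sum fun c _ => ?_
  rw [Finset.sum_comm]
  refine Finset.sum_le_sum fun y _ => ?_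
  -- the log-sum inequality on the fibre `f x = c`
  have hmarg : ∑ x ∈ hXfin.toFinset with f x = c, μ.real (X ⁻¹' {x}) * μ.real (Y ⁻¹' {y}) =
      μ.real ((f ∘ X) ⁻¹' {c}) * μ.real (Y ⁻¹' {y}) := by
    rw [← Finset.sum_mul]
    simpa using congrArg (· * μ.real (Y ⁻¹' {y})) (sum_measureReal_fiber_inter hX hA f c univ)
  rw [← sum_measureReal_fiber_inter hX hA f c, ← hmarg]
  refine sum_mul_log_div_sum_le _ (fun _ _ => measureReal_nonneg)
    (fun _ _ => mul_nonneg measureReal_nonneg measureReal_nonneg) fun x _ h => ?_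
  rcases mul_eq_zero.1 h with h | h
  · exact measureReal_mono_null inter_subset_left h
  · exact measureReal_mono_null inter_subset_right h

lemma condEntropy_self [IsFiniteMeasure μ] {X : Ω → α} (hX : Measurable X) :
    condEntropy μ X X = 0 := by
  refine (tsum_congr fun x => ?_).trans tsum_zero
  by_cases hx : μ (X ⁻¹' {x}) = 0
  · simp [hx]
  · have := cond_isProbabilityMeasure hx
    have hae : ∀ᵐ ω ∂μ[|X ⁻¹' {x}], X ω = x := ae_cond_mem (hX (measurableSet_singleton x))
    rw [entropy_eq_zero_of_ae_eq_const hae, mul_zero]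

lemma exists_ae_eq_const_of_entropy_eq_zero [IsProbabilityMeasure μ] {X : Ω → α}
    (hX : Measurable X) (hXfin : (range X).Finite) (h : entropy μ X = 0) :
    ∃ a, ∀ᵐ ω ∂μ, X ω = a := by
  have hA : range X ⊆ hXfin.toFinset := by simp
  rw [entropy_eq_sum hA] at h
  have hzero := (Finset.sum_eq_zero_iff_of_nonneg fun x _ =>
    negMulLog_nonneg measureReal_nonneg measureReal_le_one).1 h
  have htotal : ∑ x ∈ hXfin.toFinset, μ.real (X ⁻¹' {x}) = 1 := by
    simpa using sum_measureReal_preimage_inter_of_range_subset (μ := μ) hX hA univ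
  obtain ⟨a, ha, hpos⟩ := Finset.exists_ne_zero_of_sum_ne_zero (by rw [htotal]; exact one_ne_zero)
  refine ⟨a, ae_iff.2 ((prob_compl_eq_zero_iff (hX (measurableSet_singleton a))).2 ?_)⟩
  refine (ENNReal.toReal_eq_one_iff _).1 (by_contra fun hne => ?_)
  -- a mass strictly between 0 and 1 would contribute positive entropy
  have hlt := mul_log_neg (measureReal_nonneg.lt_of_ne' hpos) (measureReal_le_one.lt_of_ne hne)
  have h0 := hzero a ha
  rw [negMulLog, neg_mul, neg_eq_zero] at h0
  exact hlt.ne h0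

theorem exists_ae_eq_comp_of_condEntropy_eq_zero [IsProbabilityMeasure μ] {Q : Ω → β}
    {X : Ω → α} (hQ : Measurable Q) (hX : Measurable X) (hQfin : (range Q).Finite)
    (hXfin : (range X).Finite) (h : condEntropy μ Q X = 0) :
    ∃ f : α → β, Q =ᵐ[μ] f ∘ X := by
  obtain ⟨ω₀⟩ := nonempty_of_isProbabilityMeasure μ
  have hfiber : ∀ x, ∃ b, ∀ᵐ ω ∂μ, X ω = x → Q ω = b := by
    intro x
    by_cases hx : μ (X ⁻¹' {x}) = 0
    · exact ⟨Q ω₀, (measure_eq_zero_iff_ae_notMem.1 hx).mono fun ω hω hωx => absurd hωx hω⟩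
    have := cond_isProbabilityMeasure hx
    obtain ⟨b, hb⟩ := exists_ae_eq_const_of_entropy_eq_zero hQ hQfin
      (entropy_cond_eq_zero_of_condEntropy_eq_zero hXfin h hx)
    exact ⟨b, ae_imp_of_ae_cond (hX (measurableSet_singleton x)) hb⟩
  choose f hf using hfiber
  refine ⟨f, ?_⟩
  filter_upwards [(Filter.eventually_all_finset hXfin.toFinset).2 fun x _ => hf x] with ω hω
  exact hω (X ω) (by simp) rfl

end Discrete

/-- Self-redundancy, Axiom 2, for the ordering `Q ⊏ X ↔ H[Q|X] = 0`:
with a single source the redundant information equals the mutual information,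
`sSup {I[Q:Y] | H[Q|X] = 0} = I[X:Y]`. -/
theorem self_redundancy {Ω : Type*} [MeasurableSpace Ω]
    (μ : Measure Ω) [IsProbabilityMeasure μ]
    (X Y : Ω → ℕ) (hX : Measurable X) (hY : Measurable Y)
    (hXfin : (Set.range X).Finite) (hYfin : (Set.range Y).Finite) :
    sSup {x : ℝ | ∃ Q : Ω → ℕ, Measurable Q ∧ (Set.range Q).Finite ∧
        condEntropy μ Q X = 0 ∧ x = mutualInfo μ Q Y} =
      mutualInfo μ X Y := by
  refine IsGreatest.csSup_eq ⟨⟨X, hX, hXfin, condEntropy_self hX, rfl⟩, ?_⟩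
  rintro _ ⟨Q, hQ, hQfin, hQX, rfl⟩
  obtain ⟨f, hf⟩ := exists_ae_eq_comp_of_condEntropy_eq_zero hQ hX hQfin hXfin hQX
  rw [mutualInfo_congr_ae hf]
  exact mutualInfo_comp_le hX hY hXfin hYfin measurable_from_nat
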